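/- Let n ≥ 3 be odd, and let X and Y be disjoint subsets of the vertices of the cycle C_n with |X| and |Y| both odd. Let B be the complete bipartite graph on the vertex set of C_n whose edges are all pairs {x,y} with x ∈ X and y ∈ Y. Then the 2-rank of the symmetric difference graph C_n △ B satisfies r₂(C_n △ B) ≥ n - 1. -/

import Mathlib

open scoped Classical

/-- A list of bicliques `B 0, …, B (k-1)` (each given by a pair of disjoint
vertex subsets) is an *odd cover* of `G` if two distinct vertices are adjacent
in `G` exactly when they lie in opposite parts of an odd number of the bicliques. -/
def IsOddCover {V : Type*} [Fintype V] (G : SimpleGraph V) {k : ℕ}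
    (B : Fin k → Finset V × Finset V) : Prop :=
  (∀ i, Disjoint (B i).1 (B i).2) ∧
  ∀ u v : V, u ≠ v →
    (G.Adj u v ↔ Odd (Finset.univ.filter (fun i : Fin k =>
      (u ∈ (B i).1 ∧ v ∈ (B i).2) ∨ (u ∈ (B i).2 ∧ v ∈ (B i).1))).card)

/-- `b2 G` is the minimum cardinality of an odd cover of `G`. -/
noncomputable def b2 {V : Type*} [Fintype V] (G : SimpleGraph V) : ℕ :=
  sInf {k : ℕ | ∃ B : Fin k → Finset V × Finset V, IsOddCover G B}

/-- `r2 G` is the rank of the adjacency matrix of `G` over `𝔽₂`. -/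
noncomputable def r2 {V : Type*} [Fintype V] (G : SimpleGraph V) : ℕ :=
  (Matrix.of fun u v : V => if G.Adj u v then (1 : ZMod 2) else 0).rank


/-- The cycle graph on `n` vertices `0,1,…,n-1`, with `i` adjacent to `j`
iff `i - j ≡ ±1 (mod n)`. -/
def cycleGraph (n : ℕ) : SimpleGraph (Fin n) :=
  SimpleGraph.fromRel (fun i j => (i.val + 1) % n = j.val)

/-!
Over `𝔽₂` the adjacency matrix of `C_n △ B` is `A = C + B`, and `(A x)(u) = x(u - 1) + x(u + 1)
+ [u ∈ X] Σ_Y x + [u ∈ Y] Σ_X x`. By rank–nullity it suffices to show that the kernel of `A` meets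
the hyperplane `Σ_X x = 0` trivially. Summing `A x = 0` over all vertices, every cycle term occurs
twice, leaving `|X| Σ_Y x + |Y| Σ_X x = 0`; so `Σ_X x = 0` forces `Σ_Y x = 0` as `|X|` is odd. Then
`x(u - 1) = x(u + 1)` for all `u`, and as `n` is odd, `2` generates `ℤ/n`, so `x` is constant;
finally `0 = Σ_X x = |X| x(0) = x(0)`.
-/

open Finset Matrix

theorem r2_eq_rank_adjMatrix {V : Type*} [Fintype V] (G : SimpleGraph V) [DecidableRel G.Adj] :
    r2 G = (G.adjMatrix (ZMod 2)).rank := by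
  unfold r2 SimpleGraph.adjMatrix
  congr!

theorem SimpleGraph.adjMatrix_symmDiff {V R : Type*} [AddMonoidWithOne R] [CharP R 2]
    (G H : SimpleGraph V) [DecidableRel G.Adj] [DecidableRel H.Adj]
    [DecidableRel (symmDiff G H).Adj] :
    (symmDiff G H).adjMatrix R = G.adjMatrix R + H.adjMatrix R := by
  ext u v
  rw [Matrix.add_apply, adjMatrix_apply, adjMatrix_apply, adjMatrix_apply]
  by_cases hG : G.Adj u v <;> by_cases hH : H.Adj u v <;>
    simp [symmDiff_def, hG, hH, one_add_one_eq_two, CharTwo.two_eq_zero]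

theorem Matrix.card_sub_one_le_rank {m n K : Type*} [Fintype m] [Fintype n] [Field K]
    (A : Matrix m n K) (w : n → K) (h : ∀ x, A *ᵥ x = 0 → w ⬝ᵥ x = 0 → x = 0) :
    Fintype.card n - 1 ≤ A.rank := by
  have hinj : Function.Injective
      ((dotProductBilin K K w).comp (LinearMap.ker A.mulVecLin).subtype) := by
    rw [← LinearMap.ker_eq_bot, LinearMap.ker_eq_bot']
    exact fun x hx => Subtype.ext (h x x.2 hx)
  have hker := LinearMap.finrank_le_finrank_of_injective hinj
  have hrank := A.mulVecLin.finrank_range_add_finrank_ker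
  rw [Module.finrank_self] at hker
  rw [Module.finrank_fintype_fun_eq_card] at hrank
  rw [Matrix.rank]
  omega

open Fin.CommRing in
theorem Fin.apply_eq_apply_zero_of_apply_add_two {n : ℕ} [NeZero n] (hodd : Odd n) {α : Type*}
    (x : Fin n → α) (h : ∀ u, x (u + 2) = x u) (u : Fin n) : x u = x 0 := by
  obtain ⟨m, rfl⟩ := hodd
  have hmul (k : ℕ) : x (2 * k) = x 0 := by
    induction k with
    | zero => simp
    | succ k ih => rw [Nat.cast_succ, mul_add_one, h, ih]
  -- `2 (m + 1) = (2 m + 1) + 1 ≡ 1`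
  have hu : u = 2 * ((m + 1) * u.val : ℕ) := by
    have : ((2 * m + 1 : ℕ) : Fin (2 * m + 1)) = 0 := Fin.natCast_self _
    push_cast at this ⊢
    linear_combination (-u) * this
  rw [hu, hmul]

theorem cycleGraph_eq_cycleGraph (n : ℕ) : cycleGraph n = SimpleGraph.cycleGraph n := by
  match n with
  | 0 | 1 => exact Subsingleton.elim _ _
  | n + 2 =>
    ext u v
    have hsucc (a b : Fin (n + 2)) : (a.val + 1) % (n + 2) = b.val ↔ a + 1 = b := by
      rw [Fin.ext_iff, Fin.val_add, Fin.val_one]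
    simp only [cycleGraph, SimpleGraph.fromRel_adj, SimpleGraph.cycleGraph_adj, hsucc,
      sub_eq_iff_eq_add']
    constructor
    · rintro ⟨-, h | h⟩
      · exact Or.inr h.symm
      · exact Or.inl h.symm
    · rintro (rfl | rfl)
      · exact ⟨add_ne_left.mpr one_ne_zero, Or.inr rfl⟩
      · exact ⟨(add_ne_left.mpr one_ne_zero).symm, Or.inl rfl⟩

theorem cycleGraph_adjMatrix_mulVec_apply {R : Type*} [NonAssocSemiring R] (n : ℕ)
    [DecidableRel (cycleGraph (n + 3)).Adj] (x : Fin (n + 3) → R) (u : Fin (n + 3)) :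
    ((cycleGraph (n + 3)).adjMatrix R *ᵥ x) u = x (u - 1) + x (u + 1) := by
  have hnbr : (cycleGraph (n + 3)).neighborFinset u = {u - 1, u + 1} := by
    ext v
    rw [SimpleGraph.mem_neighborFinset, cycleGraph_eq_cycleGraph, ← SimpleGraph.mem_neighborFinset,
      SimpleGraph.cycleGraph_neighborFinset]
  have htwo : (1 + 1 : Fin (n + 3)) ≠ 0 := by
    rw [Ne, Fin.ext_iff, Fin.val_add, Fin.val_one, Nat.mod_eq_of_lt (by omega)]
    simp
  rw [SimpleGraph.adjMatrix_mulVec_apply, hnbr, sum_pair]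
  rwa [Ne, sub_eq_iff_eq_add, add_assoc, left_eq_add]

def biclique {V : Type*} (X Y : Finset V) : SimpleGraph V :=
  SimpleGraph.fromRel fun u v => u ∈ X ∧ v ∈ Y

theorem biclique_adj {V : Type*} {X Y : Finset V} {u v : V} :
    (biclique X Y).Adj u v ↔ u ≠ v ∧ (u ∈ X ∧ v ∈ Y ∨ v ∈ X ∧ u ∈ Y) :=
  SimpleGraph.fromRel_adj _ _ _

theorem biclique_neighborFinset {V : Type*} [Fintype V] [DecidableEq V] {X Y : Finset V}
    (hXY : Disjoint X Y) [DecidableRel (biclique X Y).Adj] (u : V) :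
    (biclique X Y).neighborFinset u = if u ∈ X then Y else if u ∈ Y then X else ∅ := by
  ext w
  rw [SimpleGraph.mem_neighborFinset, biclique_adj]
  split_ifs <;> grind [disjoint_left]

theorem biclique_adjMatrix_mulVec_apply {V R : Type*} [Fintype V] [DecidableEq V]
    [NonAssocSemiring R] {X Y : Finset V} (hXY : Disjoint X Y) [DecidableRel (biclique X Y).Adj]
    (x : V → R) (u : V) :
    ((biclique X Y).adjMatrix R *ᵥ x) u =
      (if u ∈ X then ∑ w ∈ Y, x w else 0) + (if u ∈ Y then ∑ w ∈ X, x w else 0) := by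
  rw [SimpleGraph.adjMatrix_mulVec_apply, biclique_neighborFinset hXY]
  by_cases huX : u ∈ X
  · simp [huX, disjoint_left.mp hXY huX]
  · by_cases huY : u ∈ Y <;> simp [huX, huY]

open Fin.CommRing in
theorem eq_zero_of_cycleGraph_add_biclique_mulVec_eq_zero {n : ℕ} (hodd : Odd (n + 3))
    {X Y : Finset (Fin (n + 3))} (hXY : Disjoint X Y) (hX : Odd #X)
    [DecidableRel (cycleGraph (n + 3)).Adj] [DecidableRel (biclique X Y).Adj]
    {x : Fin (n + 3) → ZMod 2}
    (hx : ((cycleGraph (n + 3)).adjMatrix (ZMod 2) + (biclique X Y).adjMatrix (ZMod 2)) *ᵥ x = 0)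
    (hsX : ∑ u ∈ X, x u = 0) : x = 0 := by
  have hxu (u : Fin (n + 3)) : x (u - 1) + x (u + 1) +
      ((if u ∈ X then ∑ w ∈ Y, x w else 0) + (if u ∈ Y then ∑ w ∈ X, x w else 0)) = 0 := by
    rw [← cycleGraph_adjMatrix_mulVec_apply, ← biclique_adjMatrix_mulVec_apply hXY,
      ← Pi.add_apply, ← add_mulVec, hx, Pi.zero_apply]
  have hsY : ∑ w ∈ Y, x w = 0 := by
    have hsum := Finset.sum_congr rfl fun u (_ : u ∈ univ) => hxu u
    have hsub : ∑ u, x (u - 1) = ∑ u, x u := Equiv.sum_comp (Equiv.subRight 1) x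
    have hadd : ∑ u, x (u + 1) = ∑ u, x u := Equiv.sum_comp (Equiv.addRight 1) x
    rw [sum_add_distrib, sum_add_distrib, sum_add_distrib, hsub, hadd, CharTwo.add_self_eq_zero,
      sum_ite_mem, sum_ite_mem] at hsum
    simpa [hsX, ZMod.natCast_eq_one_iff_odd.mpr hX] using hsum
  have hconst : ∀ u, x u = x 0 := by
    refine Fin.apply_eq_apply_zero_of_apply_add_two hodd x fun u => ?_
    have := hxu (u + 1)
    simp only [hsX, hsY, ite_self, add_zero, add_sub_cancel_right, CharTwo.add_eq_zero] at this
    rw [this, add_assoc, one_add_one_eq_two]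
  have hx0 : x 0 = 0 := by
    simpa [hconst _, ZMod.natCast_eq_one_iff_odd.mpr hX] using hsX
  funext u
  rw [hconst, hx0, Pi.zero_apply]

theorem stmt13_general (n : ℕ) (hn : 3 ≤ n) (hodd : Odd n)
    (X Y : Finset (Fin n)) (hXY : Disjoint X Y)
    (hX : Odd X.card) :
    n - 1 ≤ r2 (symmDiff (cycleGraph n)
      (SimpleGraph.fromRel (fun u v => u ∈ X ∧ v ∈ Y))) := by
  obtain ⟨n, rfl⟩ := Nat.exists_eq_add_of_le' hn
  change n + 3 - 1 ≤ r2 (symmDiff (cycleGraph (n + 3)) (biclique X Y))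
  rw [r2_eq_rank_adjMatrix, SimpleGraph.adjMatrix_symmDiff]
  simpa using Matrix.card_sub_one_le_rank _ (fun u => if u ∈ X then 1 else 0)
    fun x hx hsX => eq_zero_of_cycleGraph_add_biclique_mulVec_eq_zero hodd hXY hX hx
      (by simpa [dotProduct, sum_ite_mem] using hsX)

theorem stmt13 (n : ℕ) (hn : 3 ≤ n) (hodd : Odd n)
    (X Y : Finset (Fin n)) (hXY : Disjoint X Y)
    (hX : Odd X.card) (hY : Odd Y.card) :
    n - 1 ≤ r2 (symmDiff (cycleGraph n)
      (SimpleGraph.fromRel (fun u v => u ∈ X ∧ v ∈ Y))) :=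
  stmt13_general n hn hodd X Y hXY hX
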